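/- Let v and w be bounded linear operators on a complex Banach space with ‖v‖ + ‖w‖ ≤ 1. Then ‖Arcsin(v + w) − Arcsin v‖ ≤ arcsin(‖v‖ + ‖w‖) − arcsin(‖v‖). -/

import Mathlib

/-!
The coefficients `c_j` are nonnegative and `‖(v + w)^n - v^n‖ ≤ (‖v‖ + ‖w‖)^n - ‖v‖^n`, so the
series for `Arcsin (v + w) - Arcsin v` is dominated termwise by the scalar series
`∑ c_j ((‖v‖ + ‖w‖)^(2j+1) - ‖v‖^(2j+1))`. It remains to see that `∑ c_j x^(2j+1) = arcsin x`
for `|x| ≤ 1`. For `|x| < 1` this is the binomial series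
`1 / √(1 - t²) = ∑ multichoose(1/2, j) t^(2j)` integrated termwise from `0` to `x`; at `x = ±1`
it follows by monotone convergence, the coefficients being nonnegative.
-/

open scoped ENNReal NNReal

noncomputable section

/-- The Maclaurin coefficients of arcsin: `c_j = (2j)! / (4^j (j!)^2 (2j+1)) ≥ 0`. -/
def arcsinCoeff (j : ℕ) : ℝ :=
  (Nat.factorial (2 * j) : ℝ) / (4 ^ j * (Nat.factorial j : ℝ) ^ 2 * (2 * j + 1))

/-- `Arcsin v := ∑_{j≥0} c_j v^{2j+1}` for a bounded operator `v` (absolutely convergent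
when `‖v‖ ≤ 1`). -/
def opArcsin {E : Type*} [NormedAddCommGroup E] [NormedSpace ℂ E]
    (v : E →L[ℂ] E) : E →L[ℂ] E :=
  ∑' j : ℕ, (arcsinCoeff j : ℂ) • v ^ (2 * j + 1)

open Filter Topology Set

theorem hasSum_of_nonneg_of_hasSum_mul_pow_tendsto {ι : Type*} {a : ι → ℝ} {k : ι → ℕ}
    {F : ℝ → ℝ} {L : ℝ} (ha : 0 ≤ a)
    (hF : ∀ x ∈ Ioo (0 : ℝ) 1, HasSum (fun i => a i * x ^ k i) (F x))
    (hL : Tendsto F (𝓝[<] 1) (𝓝 L)) : HasSum a L := by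
  have hfinset : ∀ u : Finset ι, ∑ i ∈ u, a i ≤ L := by
    intro u
    have hcont : Continuous fun x : ℝ => ∑ i ∈ u, a i * x ^ k i := by fun_prop
    have hpoly : Tendsto (fun x : ℝ => ∑ i ∈ u, a i * x ^ k i) (𝓝[<] 1) (𝓝 (∑ i ∈ u, a i)) := by
      simpa using (hcont.tendsto 1).mono_left nhdsWithin_le_nhds
    refine le_of_tendsto_of_tendsto hpoly hL ?_
    filter_upwards [Ioo_mem_nhdsLT zero_lt_one] with x hx
    exact sum_le_hasSum u (fun i _ => mul_nonneg (ha i) (pow_nonneg hx.1.le _)) (hF x hx)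
  have hs := summable_of_sum_le ha hfinset
  refine hs.hasSum_iff.mpr (le_antisymm (hs.tsum_le_of_sum_le hfinset) ?_)
  refine le_of_tendsto hL ?_
  filter_upwards [Ioo_mem_nhdsLT zero_lt_one] with x hx
  rw [← (hF x hx).tsum_eq]
  exact (hF x hx).summable.tsum_le_tsum
    (fun i => mul_le_of_le_one_right (ha i) (pow_le_one₀ hx.1.le hx.2.le)) hs

theorem ascPochhammer_eval_half (n : ℕ) :
    (ascPochhammer ℝ n).eval (1 / 2) = (2 * n).factorial / (4 ^ n * n.factorial) := by
  induction n with
  | zero => simp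
  | succ n ih =>
    rw [ascPochhammer_succ_eval, ih, show 2 * (n + 1) = 2 * n + 1 + 1 by ring]
    simp only [Nat.factorial_succ]
    push_cast
    field_simp
    ring

theorem multichoose_half_eq (n : ℕ) :
    Ring.multichoose (1 / 2 : ℝ) n = (2 * n).factorial / (4 ^ n * n.factorial ^ 2) := by
  have h := Ring.factorial_nsmul_multichoose_eq_ascPochhammer (1 / 2 : ℝ) n
  rw [Polynomial.ascPochhammer_smeval_eq_eval, ascPochhammer_eval_half, nsmul_eq_mul] at h
  field_simp at h ⊢
  linear_combination h

theorem multichoose_half_nonneg (n : ℕ) : 0 ≤ Ring.multichoose (1 / 2 : ℝ) n := by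
  rw [multichoose_half_eq]
  positivity

theorem arcsinCoeff_eq_multichoose_half_div (n : ℕ) :
    arcsinCoeff n = Ring.multichoose (1 / 2 : ℝ) n / (2 * n + 1) := by
  rw [arcsinCoeff, multichoose_half_eq, div_div]

theorem arcsinCoeff_nonneg (n : ℕ) : 0 ≤ arcsinCoeff n := by
  unfold arcsinCoeff
  positivity

theorem hasSum_multichoose_half_mul_pow {y : ℝ} (hy : |y| < 1) :
    HasSum (fun n => Ring.multichoose (1 / 2 : ℝ) n * y ^ n) (1 / √(1 - y)) := by
  have := (Real.one_div_one_sub_rpow_hasFPowerSeriesOnBall_zero (1 / 2)).hasSum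
    (y := y) (by simpa [enorm_eq_nnnorm, ← NNReal.coe_lt_coe] using hy)
  simp only [FormalMultilinearSeries.ofScalars_apply_eq, zero_add, smul_eq_mul] at this
  simpa only [← Ring.multichoose_eq, Real.sqrt_eq_rpow] using this

theorem integral_one_div_sqrt_one_sub_sq {x : ℝ} (hx : |x| < 1) :
    ∫ t in (0 : ℝ)..x, 1 / √(1 - t ^ 2) = Real.arcsin x := by
  have habs : ∀ t ∈ uIcc 0 x, |t| < 1 := fun t ht =>
    (by simpa using abs_sub_left_of_mem_uIcc ht : |t| ≤ |x|).trans_lt hx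
  rw [← Real.deriv_arcsin, intervalIntegral.integral_deriv_eq_sub, Real.arcsin_zero, sub_zero]
  · intro t ht
    obtain ⟨h1, h2⟩ := abs_lt.mp (habs t ht)
    exact Real.differentiableAt_arcsin.mpr ⟨h1.ne', h2.ne⟩
  · rw [Real.deriv_arcsin]
    refine ContinuousOn.intervalIntegrable (continuousOn_const.div (by fun_prop) fun t ht => ?_)
    have := (sq_lt_one_iff_abs_lt_one t).mpr (habs t ht)
    exact (Real.sqrt_pos.mpr (by linarith)).ne'

theorem hasSum_arcsinCoeff_mul_pow_of_abs_lt_one {x : ℝ} (hx : |x| < 1) :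
    HasSum (fun n => arcsinCoeff n * x ^ (2 * n + 1)) (Real.arcsin x) := by
  have habs : ∀ t ∈ uIoc 0 x, |t| ≤ |x| := fun t ht => by
    simpa using abs_sub_left_of_mem_uIcc (uIoc_subset_uIcc ht)
  have hsq : ∀ t, |t| ≤ |x| → |t ^ 2| < 1 := fun t ht => by
    rw [abs_pow, sq_lt_one_iff₀ (abs_nonneg t)]
    exact ht.trans_lt hx
  have hseries := intervalIntegral.hasSum_integral_of_dominated_convergence
    (μ := MeasureTheory.volume) (F := fun n t => Ring.multichoose (1 / 2 : ℝ) n * (t ^ 2) ^ n)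
    (bound := fun n _ => Ring.multichoose (1 / 2 : ℝ) n * (x ^ 2) ^ n)
    (fun n => by fun_prop)
    (fun n => Eventually.of_forall fun t ht => by
      rw [Real.norm_eq_abs, abs_of_nonneg (mul_nonneg (multichoose_half_nonneg n) (by positivity))]
      exact mul_le_mul_of_nonneg_left
        (pow_le_pow_left₀ (sq_nonneg t) (sq_le_sq.mpr (habs t ht)) n) (multichoose_half_nonneg n))
    (Eventually.of_forall fun _ _ => (hasSum_multichoose_half_mul_pow (hsq x le_rfl)).summable)
    intervalIntegrable_const
    (Eventually.of_forall fun t ht => hasSum_multichoose_half_mul_pow (hsq t (habs t ht)))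
  rw [← integral_one_div_sqrt_one_sub_sq hx]
  refine hseries.congr_fun fun n => ?_
  simp only [← pow_mul, intervalIntegral.integral_const_mul, integral_pow,
    arcsinCoeff_eq_multichoose_half_div]
  push_cast
  ring

theorem hasSum_arcsinCoeff : HasSum arcsinCoeff (Real.pi / 2) := by
  refine hasSum_of_nonneg_of_hasSum_mul_pow_tendsto (k := fun n => 2 * n + 1)
    arcsinCoeff_nonneg (fun x hx => hasSum_arcsinCoeff_mul_pow_of_abs_lt_one ?_) ?_
  · rw [abs_of_pos hx.1]
    exact hx.2
  · rw [← Real.arcsin_one]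
    exact (Real.continuous_arcsin.tendsto 1).mono_left nhdsWithin_le_nhds

theorem hasSum_arcsinCoeff_mul_pow {x : ℝ} (hx : |x| ≤ 1) :
    HasSum (fun n => arcsinCoeff n * x ^ (2 * n + 1)) (Real.arcsin x) := by
  rcases hx.lt_or_eq with hx | hx
  · exact hasSum_arcsinCoeff_mul_pow_of_abs_lt_one hx
  rcases (abs_eq zero_le_one).mp hx with rfl | rfl
  · simpa [Real.arcsin_one] using hasSum_arcsinCoeff
  · simpa [Real.arcsin_neg_one, pow_succ, pow_mul, neg_div] using hasSum_arcsinCoeff.neg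

theorem norm_add_pow_sub_pow_le {A : Type*} [SeminormedRing A] (a b : A) (n : ℕ) :
    ‖(a + b) ^ n - a ^ n‖ ≤ (‖a‖ + ‖b‖) ^ n - ‖a‖ ^ n := by
  rcases n with _ | n
  · simp
  induction n with
  | zero => simp
  | succ n ih =>
    have hsplit : (a + b) ^ (n + 2) - a ^ (n + 2) =
        ((a + b) ^ (n + 1) - a ^ (n + 1)) * (a + b) + a ^ (n + 1) * b := by
      noncomm_ring
    calc ‖(a + b) ^ (n + 2) - a ^ (n + 2)‖
        ≤ ((‖a‖ + ‖b‖) ^ (n + 1) - ‖a‖ ^ (n + 1)) * (‖a‖ + ‖b‖) + ‖a‖ ^ (n + 1) * ‖b‖ := by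
          rw [hsplit]
          refine (norm_add_le _ _).trans (add_le_add ?_ ?_)
          · exact (norm_mul_le _ _).trans
              (mul_le_mul ih (norm_add_le a b) (norm_nonneg _) ((norm_nonneg _).trans ih))
          · exact (norm_mul_le _ _).trans
              (mul_le_mul_of_nonneg_right (norm_pow_le' a n.succ_pos) (norm_nonneg b))
      _ = (‖a‖ + ‖b‖) ^ (n + 2) - ‖a‖ ^ (n + 2) := by ring

theorem norm_tsum_smul_pow_sub_tsum_smul_pow_le {ι 𝕜 A : Type*} [RCLike 𝕜] [NormedRing A]
    [NormedSpace 𝕜 A] [CompleteSpace A] {a : ι → ℝ} {k : ι → ℕ} (ha : 0 ≤ a) (hk : ∀ i, 0 < k i)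
    {v w : A} (hsum : Summable fun i => a i * (‖v‖ + ‖w‖) ^ k i) :
    ‖∑' i, (a i : 𝕜) • (v + w) ^ k i - ∑' i, (a i : 𝕜) • v ^ k i‖ ≤
      ∑' i, a i * (‖v‖ + ‖w‖) ^ k i - ∑' i, a i * ‖v‖ ^ k i := by
  have hnorm : ∀ i (x : A), ‖(a i : 𝕜) • x‖ = a i * ‖x‖ := fun i x => by
    rw [norm_smul, RCLike.norm_ofReal, abs_of_nonneg (ha i)]
  have hv : ‖v‖ ≤ ‖v‖ + ‖w‖ := le_add_of_nonneg_right (norm_nonneg w)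
  have hsum_v : Summable fun i => a i * ‖v‖ ^ k i :=
    hsum.of_nonneg_of_le (fun i => mul_nonneg (ha i) (by positivity))
      (fun i => mul_le_mul_of_nonneg_left (pow_le_pow_left₀ (norm_nonneg v) hv _) (ha i))
  have hsummable : ∀ u : A, ‖u‖ ≤ ‖v‖ + ‖w‖ → Summable fun i => (a i : 𝕜) • u ^ k i :=
    fun u hu => .of_norm_bounded hsum fun i => by
      rw [hnorm]
      exact mul_le_mul_of_nonneg_left
        ((norm_pow_le' u (hk i)).trans (pow_le_pow_left₀ (norm_nonneg u) hu _)) (ha i)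
  have hbound : ∀ i, ‖(a i : 𝕜) • ((v + w) ^ k i - v ^ k i)‖ ≤
      a i * (‖v‖ + ‖w‖) ^ k i - a i * ‖v‖ ^ k i := fun i => by
    rw [hnorm, ← mul_sub]
    exact mul_le_mul_of_nonneg_left (norm_add_pow_sub_pow_le v w _) (ha i)
  rw [← (hsummable _ (norm_add_le v w)).tsum_sub (hsummable v hv), ← hsum.tsum_sub hsum_v]
  simp_rw [← smul_sub]
  exact tsum_of_norm_bounded (hsum.sub hsum_v).hasSum hbound

/-- If `‖v‖ + ‖w‖ ≤ 1` then
`‖Arcsin(v + w) − Arcsin v‖ ≤ arcsin(‖v‖ + ‖w‖) − arcsin ‖v‖`. -/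
theorem norm_opArcsin_sub_opArcsin_le
    (E : Type*) [NormedAddCommGroup E] [NormedSpace ℂ E] [CompleteSpace E]
    (v w : E →L[ℂ] E) (h : ‖v‖ + ‖w‖ ≤ 1) :
    ‖opArcsin (v + w) - opArcsin v‖ ≤
      Real.arcsin (‖v‖ + ‖w‖) - Real.arcsin ‖v‖ := by
  have hvw : |‖v‖ + ‖w‖| ≤ 1 := by rwa [abs_of_nonneg (by positivity)]
  have hv : |‖v‖| ≤ 1 := by
    rw [abs_norm]
    linarith [norm_nonneg w]
  rw [← (hasSum_arcsinCoeff_mul_pow hvw).tsum_eq, ← (hasSum_arcsinCoeff_mul_pow hv).tsum_eq]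
  exact norm_tsum_smul_pow_sub_tsum_smul_pow_le arcsinCoeff_nonneg (fun _ => Nat.succ_pos _)
    (hasSum_arcsinCoeff_mul_pow hvw).summable
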